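/- Let G be a group in which for every pair of elements g, h there exists s ∈ ℕ with h^{p^s} ∈ C_G(g) (p a fixed prime), and suppose G is locally nilpotent. Then every commutator (g,h) is a p-element, and hence the commutator subgroup G' is a p-group. -/

import Mathlib

/-!
Write `S' = S.lowerCentralSeries 1`. In a nilpotent group `S` the `p`-elements form a subgroup:
if `y ^ p ^ m = 1`, then `(x * y) ^ p ^ m` is a product of conjugates `y ^ i * x * y ^ (-i)`, which
lie in `S' ⊔ ⟨x⟩`, a subgroup of smaller class. In the quotient by this subgroup there is no
`p`-torsion, and there `p ^ s`-th roots are unique (again by induction on the class, through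
`S' ⊔ ⟨a⟩`). Hence if `x` commutes with `h ^ p ^ s`, the conjugate `x * h * x⁻¹` and `h` have the
same `p ^ s`-th power modulo `p`-elements, so `⁅x, h⁆` is a `p`-element. Local nilpotency reduces
everything to the subgroups generated by two elements.
-/

open MonoidAlgebra

/-- The augmentation map of a group algebra. -/
noncomputable def aug (F G : Type*) [CommSemiring F] [Group G] :
    MonoidAlgebra F G →ₐ[F] F := MonoidAlgebra.lift (R := F) (A := F) (M := G) 1

/-- The classical involution `∑ a_g g ↦ ∑ a_g g⁻¹` of a group algebra. -/
noncomputable def classicalStar {F G : Type*} [CommSemiring F] [Group G]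
    (x : MonoidAlgebra F G) : MonoidAlgebra F G := MonoidAlgebra.mapDomain (·⁻¹) x

/-- A unit of the group algebra is unitary if it is normalized (augmentation one)
and its classical star is its inverse. -/
def IsUnitaryUnit {F G : Type*} [CommSemiring F] [Group G]
    (u : (MonoidAlgebra F G)ˣ) : Prop :=
  aug F G (u : MonoidAlgebra F G) = 1 ∧
    classicalStar (u : MonoidAlgebra F G) = ((u⁻¹ : (MonoidAlgebra F G)ˣ) : MonoidAlgebra F G)

/-- A group is locally nilpotent if every finitely generated subgroup is nilpotent. -/
def IsLocallyNilpotent (G : Type*) [Group G] : Prop :=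
  ∀ H : Subgroup G, H.FG → Group.IsNilpotent H

/-- `V_*(FG)` is locally nilpotent: every finitely generated subgroup of the unit
group consisting of unitary units is nilpotent. -/
def VstarLocallyNilpotent (F G : Type*) [CommSemiring F] [Group G] : Prop :=
  ∀ S : Subgroup (MonoidAlgebra F G)ˣ, (∀ u ∈ S, IsUnitaryUnit u) → S.FG →
    Group.IsNilpotent S

/-- `V(FG)` is locally nilpotent: every finitely generated subgroup of the unit
group consisting of normalized units is nilpotent. -/
def VLocallyNilpotent (F G : Type*) [CommSemiring F] [Group G] : Prop :=
  ∀ S : Subgroup (MonoidAlgebra F G)ˣ,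
    (∀ u ∈ S, aug F G (u : MonoidAlgebra F G) = 1) → S.FG → Group.IsNilpotent S

/-- `ĉ = 1 + c + ⋯ + c^(p-1)` in the group algebra. -/
noncomputable def chat (F : Type*) {G : Type*} [CommSemiring F] [Group G]
    (c : G) (p : ℕ) : MonoidAlgebra F G :=
  ∑ i ∈ Finset.range p, MonoidAlgebra.of F G c ^ i

/-- The commutator `(x,y) = x⁻¹y⁻¹xy`. -/
def gcomm {M : Type*} [Group M] (x y : M) : M := x⁻¹ * y⁻¹ * x * y

/-- Left-normed iterated commutator `(x, y, n)`. -/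
def itComm {M : Type*} [Group M] (x y : M) : ℕ → M
  | 0 => x
  | n + 1 => gcomm (itComm x y n) y


open scoped commutatorElement

section PElement

variable {G H : Type*} [Group G] [Group H] {p : ℕ}

def IsPElement (p : ℕ) (g : G) : Prop := ∃ n : ℕ, g ^ p ^ n = 1

namespace IsPElement

variable {g k : G}

lemma one : IsPElement p (1 : G) := ⟨0, one_pow _⟩

lemma inv (hg : IsPElement p g) : IsPElement p g⁻¹ :=
  let ⟨n, hn⟩ := hg
  ⟨n, by rw [inv_pow, hn, inv_one]⟩

lemma of_pow {n : ℕ} (hg : IsPElement p (g ^ p ^ n)) : IsPElement p g :=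
  let ⟨m, hm⟩ := hg
  ⟨n + m, by rw [pow_add, pow_mul, hm]⟩

lemma map (f : G →* H) (hg : IsPElement p g) : IsPElement p (f g) :=
  let ⟨n, hn⟩ := hg
  ⟨n, by rw [← map_pow, hn, map_one]⟩

lemma conj (hg : IsPElement p g) (k : G) : IsPElement p (k * g * k⁻¹) :=
  hg.map (MulAut.conj k).toMonoidHom

lemma mul_of_commute (hgk : Commute g k) (hg : IsPElement p g) (hk : IsPElement p k) :
    IsPElement p (g * k) := by
  obtain ⟨m, hm⟩ := hg
  obtain ⟨n, hn⟩ := hk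
  refine ⟨m + n, ?_⟩
  rw [hgk.mul_pow, pow_add, pow_mul, hm, one_pow, one_mul, mul_comm, pow_mul, hn, one_pow]

lemma list_prod {M : Subgroup G}
    (hmul : ∀ x ∈ M, ∀ y ∈ M, IsPElement p x → IsPElement p y → IsPElement p (x * y))
    {l : List G} (hl : ∀ g ∈ l, g ∈ M ∧ IsPElement p g) : IsPElement p l.prod := by
  induction l with
  | nil => exact one
  | cons g l ih =>
    simp only [List.mem_cons, forall_eq_or_imp] at hl
    rw [List.prod_cons]
    exact hmul g hl.1.1 _ (M.list_prod_mem fun x hx => (hl.2 x hx).1) hl.1.2 (ih hl.2)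

end IsPElement

section PElementSubgroup

variable (hmul : ∀ x y : G, IsPElement p x → IsPElement p y → IsPElement p (x * y))

def pElementSubgroup : Subgroup G where
  carrier := {g | IsPElement p g}
  mul_mem' := hmul _ _
  one_mem' := IsPElement.one
  inv_mem' := IsPElement.inv

instance : (pElementSubgroup hmul).Normal :=
  ⟨fun _ hg k => IsPElement.conj hg k⟩

lemma isPGroup_pElementSubgroup : IsPGroup p (pElementSubgroup hmul) :=
  fun ⟨_, n, hn⟩ => ⟨n, Subtype.ext hn⟩

end PElementSubgroup

end PElement

theorem mul_pow_eq_prod_conj_mul_pow {G : Type*} [Group G] (x y : G) (n : ℕ) :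
    (x * y) ^ n = ((List.range n).map fun i => y ^ i * x * (y ^ i)⁻¹).prod * y ^ n := by
  induction n with
  | zero => simp
  | succ n ih => rw [pow_succ, ih, List.prod_range_succ, pow_succ y]; group

namespace Subgroup

open scoped Pointwise

variable {G : Type*} [Group G] {S : Subgroup G} {a : G}

lemma exists_lowerCentralSeries_succ_eq_bot (hS : Group.IsNilpotent S) :
    ∃ c, S.lowerCentralSeries (c + 1) = ⊥ := by
  obtain ⟨c, hc⟩ := (isNilpotent_iff_lowerCentralSeries S).mp hS
  exact ⟨c, eq_bot_mono (S.lowerCentralSeries_antitone c.le_succ) hc⟩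

lemma commute_of_lowerCentralSeries_one_eq_bot (hS : S.lowerCentralSeries 1 = ⊥) {b : G}
    (ha : a ∈ S) (hb : b ∈ S) : Commute a b := by
  rw [← commutatorElement_eq_one_iff_commute, ← mem_bot, ← hS]
  exact commutator_mem_commutator ha hb

lemma conj_mem_lowerCentralSeries_one_sup_zpowers {b : G} (ha : a ∈ S) (hb : b ∈ S) :
    b * a * b⁻¹ ∈ S.lowerCentralSeries 1 ⊔ zpowers a := by
  rw [← MulAut.conj_apply, conj_eq_commutatorElement_mul]
  exact mul_mem (mem_sup_left (commutator_mem_commutator hb ha)) (mem_sup_right (mem_zpowers a))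

lemma lowerCentralSeries_one_sup_zpowers_le (ha : a ∈ S) :
    S.lowerCentralSeries 1 ⊔ zpowers a ≤ S :=
  sup_le (S.lowerCentralSeries_le_self 1) (zpowers_le.mpr ha)

lemma commutator_lowerCentralSeries_one_sup_zpowers_le (ha : a ∈ S) :
    ⁅S.lowerCentralSeries 1 ⊔ zpowers a, S.lowerCentralSeries 1 ⊔ zpowers a⁆ ≤
      S.lowerCentralSeries 2 := by
  have hcomm : ∀ u ∈ S.lowerCentralSeries 1, ∀ w ∈ S, ⁅u, w⁆ ∈ S.lowerCentralSeries 2 :=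
    fun u hu w hw => commutator_mem_commutator hu hw
  have hsup : ((S.lowerCentralSeries 1 ⊔ zpowers a : Subgroup G) : Set G) =
      (S.lowerCentralSeries 1 : Set G) * zpowers a :=
    coe_mul_of_right_le_normalizer_left _ _
      (zpowers_le.mpr (S.self_le_normalizer_lowerCentralSeries 1 ha))
  rw [commutator_le]
  intro x hx y hy
  rw [← SetLike.mem_coe, hsup] at hx hy
  obtain ⟨u, hu, _, ⟨i, rfl⟩, rfl⟩ := hx
  obtain ⟨v, hv, _, ⟨j, rfl⟩, rfl⟩ := hy
  have hu' := S.lowerCentralSeries_le_self 1 hu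
  have hv' := S.lowerCentralSeries_le_self 1 hv
  -- `⁅u * a ^ i, v * a ^ j⁆ = u * ⁅a ^ i, v⁆ * u⁻¹ * ⁅u, v * a ^ j⁆` since `a ^ i`, `a ^ j` commute
  rw [commutatorElement_mul_left_eq_conj_mul, commutatorElement_mul_right_eq_mul_conj,
    (Commute.zpow_zpow_self a i j).commutator_eq, mul_one, mul_inv_cancel_right]
  refine mul_mem ?_ (hcomm u hu _ (mul_mem hv' (zpow_mem ha j)))
  refine (mem_normalizer_iff.mp (S.self_le_normalizer_lowerCentralSeries 2 hu') _).mp ?_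
  rw [← commutatorElement_inv]
  exact inv_mem (hcomm v hv _ (zpow_mem ha i))

lemma lowerCentralSeries_lowerCentralSeries_one_sup_zpowers_le (ha : a ∈ S) (n : ℕ) :
    (S.lowerCentralSeries 1 ⊔ zpowers a).lowerCentralSeries (n + 1) ≤
      S.lowerCentralSeries (n + 2) := by
  induction n with
  | zero => exact commutator_lowerCentralSeries_one_sup_zpowers_le ha
  | succ n ih => exact commutator_mono ih (lowerCentralSeries_one_sup_zpowers_le ha)

lemma lowerCentralSeries_one_sup_zpowers_eq_bot {c : ℕ} (ha : a ∈ S)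
    (hS : S.lowerCentralSeries (c + 2) = ⊥) :
    (S.lowerCentralSeries 1 ⊔ zpowers a).lowerCentralSeries (c + 1) = ⊥ :=
  eq_bot_mono (lowerCentralSeries_lowerCentralSeries_one_sup_zpowers_le ha c) hS

end Subgroup

section Nilpotent

variable {G : Type*} [Group G] {p : ℕ}

open Subgroup

theorem IsPElement.mul_of_lowerCentralSeries_eq_bot {c : ℕ} {S : Subgroup G}
    (hS : S.lowerCentralSeries (c + 1) = ⊥) {x y : G} (hx : x ∈ S) (hy : y ∈ S)
    (hpx : IsPElement p x) (hpy : IsPElement p y) : IsPElement p (x * y) := by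
  induction c generalizing S x y with
  | zero =>
    exact hpx.mul_of_commute (commute_of_lowerCentralSeries_one_eq_bot hS hx hy) hpy
  | succ c ih =>
    obtain ⟨m, hm⟩ := hpy
    refine of_pow (n := m) ?_
    rw [mul_pow_eq_prod_conj_mul_pow, hm, mul_one]
    refine list_prod
      (fun a ha b hb => ih (lowerCentralSeries_one_sup_zpowers_eq_bot hx hS) ha hb) ?_
    simp only [List.mem_map, List.mem_range, forall_exists_index, and_imp]
    rintro _ i - rfl
    exact ⟨conj_mem_lowerCentralSeries_one_sup_zpowers hx (pow_mem hy i), hpx.conj _⟩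

lemma eq_of_pow_eq_pow_of_commute {n : ℕ} {S : Subgroup G} (htf : ∀ y ∈ S, y ^ n = 1 → y = 1)
    {a b : G} (ha : a ∈ S) (hb : b ∈ S) (hab : Commute a b) (hn : a ^ n = b ^ n) : a = b := by
  have h1 : (a * b⁻¹) ^ n = 1 := by rw [hab.inv_right.mul_pow, hn, inv_pow, mul_inv_cancel]
  exact mul_inv_eq_one.mp (htf _ (mul_mem ha (inv_mem hb)) h1)

theorem eq_of_pow_eq_pow_of_lowerCentralSeries_eq_bot {n c : ℕ} {S : Subgroup G}
    (hS : S.lowerCentralSeries (c + 1) = ⊥) (htf : ∀ y ∈ S, y ^ n = 1 → y = 1)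
    {a b : G} (ha : a ∈ S) (hb : b ∈ S) (hn : a ^ n = b ^ n) : a = b := by
  induction c generalizing S a b with
  | zero =>
    exact eq_of_pow_eq_pow_of_commute htf ha hb
      (commute_of_lowerCentralSeries_one_eq_bot hS ha hb) hn
  | succ c ih =>
    have hconj : b * a * b⁻¹ = a := by
      refine ih (lowerCentralSeries_one_sup_zpowers_eq_bot ha hS)
        (fun y hy => htf y (lowerCentralSeries_one_sup_zpowers_le ha hy))
        (conj_mem_lowerCentralSeries_one_sup_zpowers ha hb) (mem_sup_right (mem_zpowers a)) ?_
      rw [conj_pow, hn, (Commute.self_pow b n).eq, mul_inv_cancel_right]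
    exact eq_of_pow_eq_pow_of_commute htf ha hb (mul_inv_eq_iff_eq_mul.mp hconj).symm hn

theorem IsPElement.commutatorElement_of_commute_pow [Group.IsNilpotent G] {x h : G} {s : ℕ}
    (hxh : Commute x (h ^ p ^ s)) : IsPElement p ⁅x, h⁆ := by
  obtain ⟨c, hc⟩ := exists_lowerCentralSeries_succ_eq_bot (Group.isNilpotent_top.mpr ‹_›)
  let T := pElementSubgroup (p := p) fun x y =>
    mul_of_lowerCentralSeries_eq_bot hc (mem_top x) (mem_top y)
  let π := QuotientGroup.mk' T
  have hQ : (⊤ : Subgroup (G ⧸ T)).lowerCentralSeries (c + 1) = ⊥ := by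
    rw [← map_top_of_surjective π (QuotientGroup.mk'_surjective T), ← map_lowerCentralSeries, hc,
      Subgroup.map_bot]
  have htf : ∀ y ∈ (⊤ : Subgroup (G ⧸ T)), y ^ p ^ s = 1 → y = 1 := by
    rintro y - hy
    obtain ⟨k, rfl⟩ := QuotientGroup.mk'_surjective T y
    rw [← map_pow] at hy
    rw [QuotientGroup.mk'_apply, QuotientGroup.eq_one_iff] at hy ⊢
    exact of_pow hy
  have hroot : π x * π h * (π x)⁻¹ = π h := by
    refine eq_of_pow_eq_pow_of_lowerCentralSeries_eq_bot hQ htf (mem_top _) (mem_top _) ?_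
    rw [conj_pow, ← map_pow, (hxh.map π).eq, mul_inv_cancel_right]
  rw [← mul_inv_eq_one, ← commutatorElement_def, ← map_commutatorElement,
    QuotientGroup.mk'_apply, QuotientGroup.eq_one_iff] at hroot
  exact hroot

end Nilpotent

namespace IsLocallyNilpotent

variable {G : Type*} [Group G] {p : ℕ}

open Subgroup

lemma isNilpotent_closure_pair (hG : IsLocallyNilpotent G) (x y : G) :
    Group.IsNilpotent (closure {x, y}) :=
  hG _ ((fg_iff _).mpr ⟨{x, y}, rfl, (Set.finite_singleton y).insert x⟩)

lemma isPElement_mul (hG : IsLocallyNilpotent G) (x y : G) (hx : IsPElement p x)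
    (hy : IsPElement p y) : IsPElement p (x * y) := by
  obtain ⟨c, hc⟩ := exists_lowerCentralSeries_succ_eq_bot (hG.isNilpotent_closure_pair x y)
  exact hx.mul_of_lowerCentralSeries_eq_bot hc (subset_closure (by simp))
    (subset_closure (by simp)) hy

lemma isPElement_commutatorElement (hG : IsLocallyNilpotent G) {x h : G} {s : ℕ}
    (hxh : Commute x (h ^ p ^ s)) : IsPElement p ⁅x, h⁆ := by
  let H := closure {x, h}
  have := hG.isNilpotent_closure_pair x h
  have hx : x ∈ H := subset_closure (by simp)
  have hh : h ∈ H := subset_closure (by simp)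
  have hxh' : Commute (⟨x, hx⟩ : H) (⟨h, hh⟩ ^ p ^ s) := Subtype.ext hxh
  exact (IsPElement.commutatorElement_of_commute_pow hxh').map H.subtype

end IsLocallyNilpotent

theorem stmt8_general (G : Type*) [Group G] (p : ℕ)
    (hloc : IsLocallyNilpotent G)
    (hcent : ∀ g h : G, ∃ s : ℕ, h ^ p ^ s ∈ Subgroup.centralizer {g}) :
    (∀ g h : G, ∃ n : ℕ, gcomm g h ^ p ^ n = 1) ∧ IsPGroup p (commutator G) := by
  have hcomm (g h : G) : IsPElement p ⁅g, h⁆ :=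
    let ⟨_, hs⟩ := hcent g h
    hloc.isPElement_commutatorElement (Subgroup.mem_centralizer_singleton_iff.mp hs).symm
  refine ⟨fun g h => ?_, ?_⟩
  · have hgh : gcomm g h = ⁅g⁻¹, h⁻¹⁆ := by simp [gcomm, commutatorElement_def]
    rw [hgh]
    exact hcomm _ _
  · refine (isPGroup_pElementSubgroup hloc.isPElement_mul).to_le ?_
    rw [commutator_eq_closure, Subgroup.closure_le]
    rintro _ ⟨g, h, rfl⟩
    exact hcomm g h

theorem stmt8 (G : Type*) [Group G] (p : ℕ) [Fact p.Prime]
    (hloc : IsLocallyNilpotent G)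
    (hcent : ∀ g h : G, ∃ s : ℕ, h ^ p ^ s ∈ Subgroup.centralizer {g}) :
    (∀ g h : G, ∃ n : ℕ, gcomm g h ^ p ^ n = 1) ∧ IsPGroup p (commutator G) :=
  stmt8_general G p hloc hcent
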